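/- arXiv:1611.04429 — 8 statements merged into one kernel-verified Lean document; each statement's English description precedes it below -/
import Mathlib

section
/- Let K, M be positive integers, D = KM. Let A be the D×D GFDM matrix whose (k+mK)-th column is the vector g_{k,m} with n-th entry g_{⟨n-mK⟩_D}·e^{2πi kn/K} (where g ∈ C^D is the prototype filter and ⟨·⟩_D denotes reduction mod D). Let G be the characteristic matrix of g. Then A = (W_M^H ⊗ I_K) · diag(vec(G)) · (W_M ⊗ W_K^H). -/
open Complex Matrix BigOperators Kronecker

noncomputable section

namespace GFDM

/-- Normalized p-point DFT matrix. -/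
def W (p : ℕ) : Matrix (Fin p) (Fin p) ℂ := fun m n =>
  Complex.exp (-2 * Real.pi * Complex.I * (m.val : ℂ) * (n.val : ℂ) / (p : ℂ)) / (Real.sqrt p : ℂ)

/-- Reshape a vector of length K*M into a K×M matrix, (k,m)-entry = g (k + m*K). -/
def reshape (K M : ℕ) (g : Fin (K * M) → ℂ) : Matrix (Fin K) (Fin M) ℂ := fun k m =>
  g ⟨k.val + m.val * K, by
    have hm := m.isLt
    calc k.val + m.val * K < K + m.val * K := by omega
      _ = (m.val + 1) * K := by ring
      _ ≤ M * K := Nat.mul_le_mul_right K hm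
      _ = K * M := Nat.mul_comm M K⟩

/-- Column-wise vectorization of a K×M matrix: (vec G) (k + m*K) = G k m. -/
def vec (K M : ℕ) (G : Matrix (Fin K) (Fin M) ℂ) : Fin (K * M) → ℂ := fun i =>
  G ⟨i.val % K, by
      have h := i.isLt
      rcases Nat.eq_zero_or_pos K with h0 | h0
      · subst h0; simp at h
      · exact Nat.mod_lt _ h0⟩
    ⟨i.val / K, Nat.div_lt_of_lt_mul i.isLt⟩

/-- The characteristic matrix G = √D · reshape(g,K,M) · W_M. -/
def charMatrix (K M : ℕ) (g : Fin (K * M) → ℂ) : Matrix (Fin K) (Fin M) ℂ :=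
  (Real.sqrt (K * M) : ℂ) • (reshape K M g * W M)

/-- Phase-shifted characteristic matrix: Ḡ_{k,m} = G_{k,m} e^{-2πi km/D}. -/
def phaseShift (K M : ℕ) (G : Matrix (Fin K) (Fin M) ℂ) : Matrix (Fin K) (Fin M) ℂ := fun k m =>
  G k m * Complex.exp (-2 * Real.pi * Complex.I * (k.val : ℂ) * (m.val : ℂ) / ((K * M : ℕ) : ℂ))

/-- Index identification (m,k) ↦ k + K·m between Fin M × Fin K and Fin (K*M). -/
def idx (K M : ℕ) : Fin M × Fin K ≃ Fin (K * M) :=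
  finProdFinEquiv.trans (finCongr (Nat.mul_comm M K))

/-- The GFDM matrix (W_M^H ⊗ I_K)·diag(vec G)·(W_M ⊗ W_K^H) built from a characteristic matrix G. -/
def gfdmOfChar (K M : ℕ) (G : Matrix (Fin K) (Fin M) ℂ) :
    Matrix (Fin (K * M)) (Fin (K * M)) ℂ :=
  Matrix.reindex (idx K M) (idx K M)
    (((W M)ᴴ ⊗ₖ (1 : Matrix (Fin K) (Fin K) ℂ)) *
      Matrix.diagonal (fun p : Fin M × Fin K => G p.2 p.1) *
      (W M ⊗ₖ (W K)ᴴ))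

/-- The GFDM matrix defined directly by its columns: the (k+mK)-th column has n-th entry
    g_{⟨n-mK⟩_D} e^{2πi kn/K}. -/
def gfdmMatrix (K M : ℕ) (g : Fin (K * M) → ℂ) : Matrix (Fin (K * M)) (Fin (K * M)) ℂ :=
  fun n c =>
    g ⟨(n.val + K * M - (c.val / K) * K) % (K * M), by
        have h := n.isLt
        rcases Nat.eq_zero_or_pos (K * M) with h0 | h0
        · omega
        · exact Nat.mod_lt _ h0⟩ *
      Complex.exp (2 * Real.pi * Complex.I * ((c.val % K : ℕ) : ℂ) * (n.val : ℂ) / (K : ℂ))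

/-- The permutation matrix Π with Π_{kM+m, nK+l} = δ_{kl} δ_{mn}. -/
def permPi (K M : ℕ) : Matrix (Fin (K * M)) (Fin (K * M)) ℂ := fun i j =>
  if i.val / M = j.val % K ∧ i.val % M = j.val / K then 1 else 0

/-- The index k + m·K as an element of Fin (K*M). -/
def vecIdx {K M : ℕ} (k : Fin K) (m : Fin M) : Fin (K * M) :=
  ⟨k.val + m.val * K, by
    have hm := m.isLt
    calc k.val + m.val * K < K + m.val * K := by omega
      _ = (m.val + 1) * K := by ring
      _ ≤ M * K := Nat.mul_le_mul_right K hm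
      _ = K * M := Nat.mul_comm M K⟩

/-- The index k·M + m as an element of Fin (K*M). -/
def rowIdx {K M : ℕ} (k : Fin K) (m : Fin M) : Fin (K * M) :=
  ⟨k.val * M + m.val, by
    have hk := k.isLt
    calc k.val * M + m.val < k.val * M + M := by omega
      _ = (k.val + 1) * M := by ring
      _ ≤ K * M := Nat.mul_le_mul_right M hk⟩


/-! Index rows by `k + K m` and columns by `k' + K m'`, and write `ζ p = e^{2πi/p}`. Both sides
then have entry `g (k + ((m - m') mod M) K) · ζ_K^{k k'}`. On the left this is index arithmetic
modulo `D = K M` together with `ζ_K^{k' (k + K m)} = ζ_K^{k k'}`. On the right the Kronecker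
factors reduce the entry to a triple sum over the `M`-point DFT index, and the orthogonality
relation `∑ x, ζ_M^{t x} = M · [M ∣ t]` picks out the single column `m - m'` of `reshape g`. -/

open Finset

def ζ (p : ℕ) : ℂ := Complex.exp (2 * Real.pi * Complex.I / p)

lemma isPrimitiveRoot_ζ {p : ℕ} (hp : p ≠ 0) : IsPrimitiveRoot (ζ p) p :=
  Complex.isPrimitiveRoot_exp p hp

lemma exp_mul_eq_ζ_zpow (p : ℕ) (t : ℤ) :
    Complex.exp (t * (2 * Real.pi * Complex.I / p)) = ζ p ^ t :=
  Complex.exp_int_mul _ t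

lemma sum_zpow_mul_eq_ite {F : Type*} [Field F] {ω : F} {M : ℕ} (hω : IsPrimitiveRoot ω M)
    (t : ℤ) : ∑ x : Fin M, ω ^ (t * ((x : ℕ) : ℤ)) = if (M : ℤ) ∣ t then (M : F) else 0 := by
  simp only [_root_.zpow_mul, zpow_natCast]
  rw [Fin.sum_univ_eq_sum_range (fun x => (ω ^ t) ^ x)]
  split_ifs with h
  · simp [(hω.zpow_eq_one_iff_dvd t).2 h]
  · rw [geom_sum_eq (mt (hω.zpow_eq_one_iff_dvd t).1 h), ← zpow_natCast, ← _root_.zpow_mul,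
      mul_comm, _root_.zpow_mul, hω.zpow_eq_one, _root_.one_zpow, sub_self, zero_div]

lemma W_apply (p : ℕ) (m n : Fin p) :
    W p m n = ζ p ^ (-(((m : ℕ) * (n : ℕ) : ℕ) : ℤ)) / (Real.sqrt p : ℂ) := by
  rw [W, ← exp_mul_eq_ζ_zpow]
  congr 2
  push_cast
  ring

lemma conjTranspose_W_apply (p : ℕ) (m n : Fin p) :
    (W p)ᴴ m n = ζ p ^ (((m : ℕ) * (n : ℕ) : ℕ) : ℤ) / (Real.sqrt p : ℂ) := by
  rw [conjTranspose_apply, W, star_div₀, Complex.star_def, Complex.conj_ofReal,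
    ← Complex.exp_conj, ← exp_mul_eq_ζ_zpow]
  congr 2
  simp only [map_div₀, map_mul, map_neg, map_ofNat, Complex.conj_I, Complex.conj_ofReal,
    Complex.conj_natCast]
  push_cast
  ring

lemma eq_sub_iff_intCast_dvd {M : ℕ} (m y m' : Fin M) :
    y = m - m' ↔ (M : ℤ) ∣ (m : ℤ) - ((y : ℤ) + m') := by
  have hmod : y = m - m' ↔ (y : ℕ) ≡ M - m' + m [MOD M] := by
    rw [Fin.ext_iff, Fin.val_sub, Nat.ModEq, Nat.mod_eq_of_lt y.isLt]
  rw [hmod, Nat.modEq_iff_dvd, Nat.cast_add, Nat.cast_sub m'.isLt.le,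
    show (M : ℤ) - m' + m - y = M + (m - (y + m')) by ring, dvd_add_right dvd_rfl]

lemma sqrt_natCast_ne_zero {p : ℕ} (hp : p ≠ 0) : (Real.sqrt p : ℂ) ≠ 0 := by
  simpa [Real.sqrt_eq_zero'] using hp

lemma sum_conjTranspose_W_mul_W_mul_W {M : ℕ} (hM : M ≠ 0) (m y m' : Fin M) :
    ∑ x, (W M)ᴴ m x * W M y x * W M x m' = if y = m - m' then (Real.sqrt M : ℂ)⁻¹ else 0 := by
  have hζ := isPrimitiveRoot_ζ hM
  have hterm : ∀ x : Fin M, (W M)ᴴ m x * W M y x * W M x m'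
      = ζ M ^ (((m : ℤ) - ((y : ℤ) + m')) * ((x : ℕ) : ℤ)) / (Real.sqrt M : ℂ) ^ 3 := by
    intro x
    rw [conjTranspose_W_apply, W_apply, W_apply, div_mul_div_comm, div_mul_div_comm,
      ← zpow_add₀ (hζ.ne_zero hM), ← zpow_add₀ (hζ.ne_zero hM)]
    congr 1
    · push_cast
      ring_nf
    · ring
  have hsq : (Real.sqrt M : ℂ) ^ 2 = M := by
    rw [← Complex.ofReal_pow, Real.sq_sqrt (Nat.cast_nonneg M)]
    norm_cast
  rw [sum_congr rfl fun x _ => hterm x, ← sum_div, sum_zpow_mul_eq_ite hζ]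
  simp only [← eq_sub_iff_intCast_dvd]
  split_ifs
  · rw [← hsq]
    field_simp [sqrt_natCast_ne_zero hM]
  · exact zero_div _

lemma idx_val {K M : ℕ} (m : Fin M) (k : Fin K) : (idx K M (m, k) : ℕ) = k + K * m := rfl

lemma gfdmOfChar_apply_idx {K M : ℕ} (G : Matrix (Fin K) (Fin M) ℂ) (m m' : Fin M)
    (k k' : Fin K) :
    gfdmOfChar K M G (idx K M (m, k)) (idx K M (m', k'))
      = (∑ x, (W M)ᴴ m x * G k x * W M x m') * (W K)ᴴ k k' := by
  simp only [gfdmOfChar, reindex_apply, submatrix_apply, Equiv.symm_apply_apply, mul_apply,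
    kroneckerMap_apply, diagonal_apply, Fintype.sum_prod_type, one_apply, ite_mul, mul_ite,
    zero_mul, mul_zero, sum_ite_eq, sum_ite_eq', mem_univ, if_true, sum_mul]
  refine sum_congr rfl fun x _ => ?_
  ring

lemma sum_conjTranspose_W_mul_charMatrix_mul_W {K M : ℕ} (hM : M ≠ 0) (g : Fin (K * M) → ℂ)
    (k : Fin K) (m m' : Fin M) :
    ∑ x, (W M)ᴴ m x * charMatrix K M g k x * W M x m'
      = Real.sqrt K * reshape K M g k (m - m') := by
  calc ∑ x, (W M)ᴴ m x * charMatrix K M g k x * W M x m'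
      = Real.sqrt (K * M) * ∑ y, reshape K M g k y * ∑ x, (W M)ᴴ m x * W M y x * W M x m' := by
        simp only [charMatrix, Matrix.smul_apply, mul_apply, smul_eq_mul, mul_sum, sum_mul]
        rw [sum_comm]
        refine sum_congr rfl fun y _ => sum_congr rfl fun x _ => ?_
        ring
    _ = Real.sqrt (K * M) * (Real.sqrt M : ℂ)⁻¹ * reshape K M g k (m - m') := by
        simp only [sum_conjTranspose_W_mul_W_mul_W hM, mul_ite, mul_zero, sum_ite_eq',
          mem_univ, if_true]
        ring
    _ = Real.sqrt K * reshape K M g k (m - m') := by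
        rw [Real.sqrt_mul (Nat.cast_nonneg K), Complex.ofReal_mul,
          mul_inv_cancel_right₀ (sqrt_natCast_ne_zero hM)]

lemma gfdmMatrix_apply_idx {K M : ℕ} (hK : K ≠ 0) (g : Fin (K * M) → ℂ) (m m' : Fin M)
    (k k' : Fin K) :
    gfdmMatrix K M g (idx K M (m, k)) (idx K M (m', k'))
      = reshape K M g k (m - m') * ζ K ^ (((k : ℕ) * (k' : ℕ) : ℕ) : ℤ) := by
  have hdiv : (idx K M (m', k') : ℕ) / K = m' := by
    rw [idx_val, Nat.add_mul_div_left _ _ (Nat.pos_of_ne_zero hK), Nat.div_eq_of_lt k'.isLt,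
      zero_add]
  have hmod : (idx K M (m', k') : ℕ) % K = k' := by
    rw [idx_val, Nat.add_mul_mod_self_left, Nat.mod_eq_of_lt k'.isLt]
  rw [gfdmMatrix, reshape]
  congr 1
  · congr 1
    ext
    dsimp only
    have hshift : (idx K M (m, k) : ℕ) + K * M - m' * K = k + K * (M - m' + m) := by
      rw [idx_val, Nat.mul_add K, Nat.mul_sub, mul_comm (m' : ℕ) K]
      have := Nat.mul_le_mul_left K m'.isLt.le
      omega
    rw [hdiv, hshift, Nat.mod_mul, Nat.add_mul_mod_self_left, Nat.mod_eq_of_lt k.isLt,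
      Nat.add_mul_div_left _ _ (Nat.pos_of_ne_zero hK), Nat.div_eq_of_lt k.isLt, zero_add,
      Fin.val_sub, mul_comm K]
  · have hζ := isPrimitiveRoot_ζ hK
    have hexp : 2 * Real.pi * Complex.I * ((k' : ℕ) : ℂ) * ((k + K * m : ℕ) : ℂ) / K
        = ((k * k' + K * (k' * m) : ℕ) : ℤ) * (2 * Real.pi * Complex.I / K) := by
      push_cast
      ring
    rw [hmod, idx_val, hexp, exp_mul_eq_ζ_zpow, Nat.cast_add, zpow_add₀ (hζ.ne_zero hK),
      Nat.cast_mul K, _root_.zpow_mul, hζ.zpow_eq_one, _root_.one_zpow, mul_one]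

theorem stmt2 (K M : ℕ) (hK : 0 < K) (hM : 0 < M) (g : Fin (K * M) → ℂ) :
    gfdmMatrix K M g = gfdmOfChar K M (charMatrix K M g) := by
  ext n c
  obtain ⟨⟨m, k⟩, rfl⟩ := (idx K M).surjective n
  obtain ⟨⟨m', k'⟩, rfl⟩ := (idx K M).surjective c
  rw [gfdmMatrix_apply_idx hK.ne', gfdmOfChar_apply_idx,
    sum_conjTranspose_W_mul_charMatrix_mul_W hM.ne', conjTranspose_W_apply]
  field_simp [sqrt_natCast_ne_zero hK.ne']

end GFDM
end
end

section
/- Let A be an invertible GFDM matrix with characteristic matrix G (so A = (W_M^H ⊗ I_K)·diag(vec(G))·(W_M ⊗ W_K^H) and G has no zero entries). Then A^{-H} := (A^{-1})^H is also a GFDM matrix, and its characteristic matrix H satisfies H_{k,l} = 1/(G_{k,l})^* for all k, l. -/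
/-!
The DFT matrices `W M` and `W K` are unitary (orthogonality of the powers of a primitive root
of unity), hence so are the outer factors `U = W_Mᴴ ⊗ I_K` and `V = W_M ⊗ W_Kᴴ` of a GFDM
matrix `A = U D V`. Therefore `A⁻¹ = Vᴴ D⁻¹ Uᴴ` and `A⁻ᴴ = U (D⁻¹)ᴴ V`: again a GFDM matrix,
whose diagonal holds the entries `1 / G*`.
-/

open Complex Matrix BigOperators Kronecker

noncomputable section

theorem IsPrimitiveRoot.sum_range_pow_mul_inv_pow {K : Type*} [Field K] {ζ : K} {p : ℕ}
    (hζ : IsPrimitiveRoot ζ p) {i j : ℕ} (hi : i < p) (hj : j < p) :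
    ∑ k ∈ Finset.range p, (ζ ^ i * (ζ ^ j)⁻¹) ^ k = if i = j then (p : K) else 0 := by
  split_ifs with hij
  · subst hij
    simp [mul_inv_cancel₀ (pow_ne_zero i (hζ.ne_zero (by omega)))]
  · have hζj : ζ ^ j ≠ 0 := pow_ne_zero j (hζ.ne_zero (by omega))
    have hμ : ζ ^ i * (ζ ^ j)⁻¹ ≠ 1 := fun h =>
      hij (hζ.pow_inj hi hj (by rwa [mul_inv_eq_one₀ hζj] at h))
    have hμp : (ζ ^ i * (ζ ^ j)⁻¹) ^ p = 1 := by
      rw [mul_pow, inv_pow, pow_right_comm, pow_right_comm ζ j, hζ.pow_eq_one, one_pow, one_pow,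
        inv_one, mul_one]
    rw [geom_sum_eq hμ, hμp, sub_self, zero_div]

lemma Complex.star_exp_two_pi_mul_I_div (p : ℕ) :
    star (exp (2 * Real.pi * I / p)) = (exp (2 * Real.pi * I / p))⁻¹ := by
  rw [← exp_neg, Complex.star_def, ← exp_conj]
  congr 1
  simp only [map_div₀, _root_.map_mul, map_ofNat, conj_ofReal, conj_I, conj_natCast]
  ring

theorem Matrix.conjTranspose_inv_mul_diagonal_mul_of_mem_unitaryGroup {n α : Type*} [Fintype n]
    [DecidableEq n] [Field α] [StarRing α] {U V : Matrix n n α} (hU : U ∈ unitaryGroup n α)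
    (hV : V ∈ unitaryGroup n α) {d : n → α} (hd : ∀ i, d i ≠ 0) :
    (U * diagonal d * V)⁻¹ᴴ = U * diagonal (fun i => (star (d i))⁻¹) * V := by
  have hinv : (U * diagonal d * V)⁻¹ = star V * diagonal d⁻¹ * star U := by
    refine inv_eq_left_inv ?_
    calc star V * diagonal d⁻¹ * star U * (U * diagonal d * V)
        = star V * (diagonal d⁻¹ * (star U * U) * diagonal d) * V := by
          simp only [Matrix.mul_assoc]
      _ = 1 := by
          rw [(mem_unitaryGroup_iff').mp hU, Matrix.mul_one, diagonal_mul_diagonal,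
            ← diagonal_one]
          simp only [Pi.inv_apply, inv_mul_cancel₀ (hd _), diagonal_one, Matrix.mul_one,
            (mem_unitaryGroup_iff').mp hV]
  rw [hinv, conjTranspose_mul, conjTranspose_mul, diagonal_conjTranspose, star_eq_conjTranspose,
    star_eq_conjTranspose, conjTranspose_conjTranspose, conjTranspose_conjTranspose,
    Matrix.mul_assoc,
    show star d⁻¹ = fun i => (star (d i))⁻¹ from funext fun i => star_inv₀ (d i)]

namespace GFDM

lemma W_apply_eq_inv_pow (p : ℕ) (m n : Fin p) :
    W p m n = ((exp (2 * Real.pi * I / p)) ^ (m.val * n.val))⁻¹ / (Real.sqrt p : ℂ) := by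
  rw [W, ← exp_nat_mul, ← exp_neg]
  congr 2
  push_cast
  ring

lemma W_mem_unitaryGroup (p : ℕ) : W p ∈ unitaryGroup (Fin p) ℂ := by
  rw [mem_unitaryGroup_iff']
  ext m n
  set ω := exp (2 * Real.pi * I / p) with hω
  have hp : p ≠ 0 := Fin.pos m |>.ne'
  have hsqrt : (Real.sqrt p : ℂ) * (Real.sqrt p : ℂ) = p := by
    rw [← ofReal_mul, Real.mul_self_sqrt (Nat.cast_nonneg p), ofReal_natCast]
  have hentry : ∀ j : Fin p,
      star (W p j m) * W p j n = (ω ^ m.val * (ω ^ n.val)⁻¹) ^ j.val / p := by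
    intro j
    rw [W_apply_eq_inv_pow, W_apply_eq_inv_pow, star_div₀, star_inv₀, star_pow,
      Complex.star_exp_two_pi_mul_I_div, Complex.star_def, conj_ofReal, ← hω, ← hsqrt,
      inv_pow ω, inv_inv]
    ring
  simp only [mul_apply, star_apply, hentry]
  rw [← Finset.sum_div, Fin.sum_univ_eq_sum_range (fun j => (ω ^ m.val * (ω ^ n.val)⁻¹) ^ j),
    (isPrimitiveRoot_exp p hp).sum_range_pow_mul_inv_pow m.isLt n.isLt, one_apply]
  simp only [Fin.val_inj]
  split_ifs <;> simp [hp]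

theorem stmt6_general (K M : ℕ) (G : Matrix (Fin K) (Fin M) ℂ)
    (h0 : ∀ (k : Fin K) (m : Fin M), G k m ≠ 0) :
    ((gfdmOfChar K M G)⁻¹)ᴴ = gfdmOfChar K M (fun k l => (star (G k l))⁻¹) := by
  have hU : (W M)ᴴ ⊗ₖ (1 : Matrix (Fin K) (Fin K) ℂ) ∈ unitaryGroup (Fin M × Fin K) ℂ :=
    kronecker_mem_unitary (Unitary.star_mem (W_mem_unitaryGroup M)) (one_mem _)
  have hV : W M ⊗ₖ (W K)ᴴ ∈ unitaryGroup (Fin M × Fin K) ℂ :=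
    kronecker_mem_unitary (W_mem_unitaryGroup M) (Unitary.star_mem (W_mem_unitaryGroup K))
  rw [gfdmOfChar, inv_reindex, conjTranspose_reindex,
    conjTranspose_inv_mul_diagonal_mul_of_mem_unitaryGroup hU hV (fun p => h0 p.2 p.1)]
  rfl

theorem stmt6 (K M : ℕ) (hK : 0 < K) (hM : 0 < M) (G : Matrix (Fin K) (Fin M) ℂ)
    (h0 : ∀ (k : Fin K) (m : Fin M), G k m ≠ 0) :
    ((gfdmOfChar K M G)⁻¹)ᴴ = gfdmOfChar K M (fun k l => (star (G k l))⁻¹) :=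
  stmt6_general K M G h0

end GFDM
end
end

section
/- Let K, M be positive integers, D = KM, let Ḡ be a K×M matrix with nonzero entries, C_0,...,C_{D-1} nonzero complex numbers, and γ > 0. For each 0 ≤ m < M define the K×K matrix F_m = u_m v_m^T + γ^{-1} ũ_m ṽ_m^T, where (u_m)_k = C_{kM+m}, (ũ_m)_k = 1/(C_{kM+m})^*, (v_m)_k = Ḡ_{k,m}, (ṽ_m)_k = 1/(Ḡ_{k,m})^*. Then there exist vectors w_m, z_m ∈ C^K with F_m = w_m z_m^T for all m if and only if for every m, either |Ḡ_{k,m}| is constant in k, or |C_{kM+m}| is constant in k. -/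
open Complex Matrix BigOperators Kronecker

noncomputable section

namespace GFDM

/-! Since `(z̄)⁻¹ = |z|⁻² z`, the matrix `F_m` has the form `a bᵀ + t (α a)(β b)ᵀ` with
`α_k = |a_k|⁻²`, `β_l = |b_l|⁻²`, i.e. `F_{kl} = a_k b_l (1 + t α_k β_l)`. Its `2 × 2` minor on
rows `k, k'` and columns `l, l'` is `t a_k a_k' b_l b_l' (α_k - α_k') (β_l - β_l')`, and these minors
vanish for an outer product `w zᵀ`; so if `β` is not constant then `α` is. Conversely, if `β ≡ c`
then `F = (a_k (1 + t c α_k))_k bᵀ`, and the case of constant `α` follows by transposing. -/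

theorem inv_star_eq_inv_sq_norm_mul (z : ℂ) : (star z)⁻¹ = ((‖z‖ : ℂ) ^ 2)⁻¹ * z := by
  rw [Complex.inv_def, Complex.star_def, Complex.conj_conj, Complex.normSq_conj,
    Complex.normSq_eq_norm_sq, mul_comm]
  push_cast
  rfl

theorem inv_sq_norm_inj {x y : ℂ} : ((‖x‖ : ℂ) ^ 2)⁻¹ = ((‖y‖ : ℂ) ^ 2)⁻¹ ↔ ‖x‖ = ‖y‖ := by
  rw [_root_.inv_inj]
  exact_mod_cast sq_eq_sq₀ (norm_nonneg x) (norm_nonneg y)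

section RankOne

variable {R ι κ : Type*} [CommRing R]

theorem vecMulVec_mul_vecMulVec_comm (w : ι → R) (z : κ → R) (k k' : ι) (l l' : κ) :
    vecMulVec w z k l * vecMulVec w z k' l' = vecMulVec w z k l' * vecMulVec w z k' l := by
  simp only [vecMulVec_apply]
  ring

theorem exists_vecMulVec_eq_add_smul_of_forall_eq (a α : ι → R) (b β : κ → R) (t : R)
    (hβ : ∀ l l', β l = β l') :
    ∃ w z, vecMulVec a b + t • vecMulVec (α * a) (β * b) = vecMulVec w z := by
  rcases isEmpty_or_nonempty κ with hκ | ⟨⟨l₀⟩⟩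
  · exact ⟨0, 0, ext fun _ l => isEmptyElim l⟩
  · refine ⟨fun k => a k * (1 + t * α k * β l₀), b, ?_⟩
    ext k l
    simp only [Matrix.add_apply, Matrix.smul_apply, vecMulVec_apply, Pi.mul_apply, smul_eq_mul, hβ l l₀]
    ring

theorem exists_vecMulVec_eq_add_smul_iff [NoZeroDivisors R] {a α : ι → R} {b β : κ → R} {t : R}
    (ha : ∀ k, a k ≠ 0) (hb : ∀ l, b l ≠ 0) (ht : t ≠ 0) :
    (∃ w z, vecMulVec a b + t • vecMulVec (α * a) (β * b) = vecMulVec w z) ↔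
      (∀ l l', β l = β l') ∨ (∀ k k', α k = α k') := by
  constructor
  · rintro ⟨w, z, h⟩
    have hminor : ∀ k k' l l', α k = α k' ∨ β l = β l' := by
      intro k k' l l'
      have hwz := vecMulVec_mul_vecMulVec_comm w z k k' l l'
      rw [← h] at hwz
      simp only [Matrix.add_apply, Matrix.smul_apply, vecMulVec_apply, Pi.mul_apply, smul_eq_mul] at hwz
      have : t * (a k * a k' * b l * b l') * ((α k - α k') * (β l - β l')) = 0 := by
        linear_combination hwz
      simpa [ht, ha, hb, sub_eq_zero] using this
    by_cases hβ : ∀ l l', β l = β l'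
    · exact .inl hβ
    · push Not at hβ
      obtain ⟨l, l', hll'⟩ := hβ
      exact .inr fun k k' => (hminor k k' l l').resolve_right hll'
  · rintro (hβ | hα)
    · exact exists_vecMulVec_eq_add_smul_of_forall_eq a α b β t hβ
    · obtain ⟨w, z, h⟩ := exists_vecMulVec_eq_add_smul_of_forall_eq b β a α t hα
      refine ⟨z, w, transpose_injective ?_⟩
      simpa only [transpose_add, transpose_smul, transpose_vecMulVec] using h

end RankOne

theorem stmt11_general (K M : ℕ)
    (Gb : Matrix (Fin K) (Fin M) ℂ) (hG : ∀ (k : Fin K) (m : Fin M), Gb k m ≠ 0)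
    (C : Fin (K * M) → ℂ) (hC : ∀ l, C l ≠ 0) (γ : ℝ) (hγ : 0 < γ) :
    (∀ m : Fin M, ∃ w z : Fin K → ℂ,
        Matrix.vecMulVec (fun k => C (rowIdx k m)) (fun k => Gb k m) +
          (γ : ℂ)⁻¹ • Matrix.vecMulVec (fun k => (star (C (rowIdx k m)))⁻¹)
            (fun k => (star (Gb k m))⁻¹) = Matrix.vecMulVec w z) ↔
      (∀ m : Fin M,
        (∀ k k' : Fin K, ‖Gb k m‖ = ‖Gb k' m‖) ∨
        (∀ k k' : Fin K, ‖C (rowIdx k m)‖ = ‖C (rowIdx k' m)‖)) := by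
  have ht : (γ : ℂ)⁻¹ ≠ 0 := by exact_mod_cast (inv_pos.2 hγ).ne'
  refine forall_congr' fun m => ?_
  have key := exists_vecMulVec_eq_add_smul_iff (fun k => hC (rowIdx k m)) (fun l => hG l m) ht
    (α := fun k => ((‖C (rowIdx k m)‖ : ℂ) ^ 2)⁻¹) (β := fun l => ((‖Gb l m‖ : ℂ) ^ 2)⁻¹)
  simpa only [inv_star_eq_inv_sq_norm_mul, Pi.mul_def, inv_sq_norm_inj] using key

theorem stmt11 (K M : ℕ) (hK : 0 < K) (hM : 0 < M)
    (Gb : Matrix (Fin K) (Fin M) ℂ) (hG : ∀ (k : Fin K) (m : Fin M), Gb k m ≠ 0)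
    (C : Fin (K * M) → ℂ) (hC : ∀ l, C l ≠ 0) (γ : ℝ) (hγ : 0 < γ) :
    (∀ m : Fin M, ∃ w z : Fin K → ℂ,
        Matrix.vecMulVec (fun k => C (rowIdx k m)) (fun k => Gb k m) +
          (γ : ℂ)⁻¹ • Matrix.vecMulVec (fun k => (star (C (rowIdx k m)))⁻¹)
            (fun k => (star (Gb k m))⁻¹) = Matrix.vecMulVec w z) ↔
      (∀ m : Fin M,
        (∀ k k' : Fin K, ‖Gb k m‖ = ‖Gb k' m‖) ∨
        (∀ k k' : Fin K, ‖C (rowIdx k m)‖ = ‖C (rowIdx k' m)‖)) :=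
  stmt11_general K M Gb hG C hC γ hγ

end GFDM
end
end

section
/- Fix positive reals E_S, γ, ξ and positive integers K, M with D = KM. For a K×M matrix G with ‖G‖_F² = Dξ, define σ²(G) = (E_S/γ)·(1/D)·Σ_{k,l} 1/(|G_{k,l}|² + γ^{-1}). Then σ²(G) ≥ E_S/(γξ + 1), with equality if and only if |G_{k,l}| is constant (equal to sqrt(ξ)) for all k, l. -/
/-! Put `a_{kl} = |G_{kl}|² + γ⁻¹`. The energy constraint fixes the mean of the `a_{kl}` at
`c = ξ + γ⁻¹`. Since `x ↦ x⁻¹` lies above its tangent line at `c`, with remainder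
`(x - c)² / (x c²)`, the mean of the `a_{kl}⁻¹` is at least `c⁻¹`, with equality exactly when
every `a_{kl} = c`, i.e. `|G_{kl}|² = ξ`. Scaling by `E_S / γ` gives `σ² ≥ E_S / (γ ξ + 1)`. -/

open Complex Matrix BigOperators Kronecker

noncomputable section

namespace GFDM

theorem inv_eq_tangent_add_sq_div {a c : ℝ} (ha : a ≠ 0) (hc : c ≠ 0) :
    a⁻¹ = (2 * c - a) / c ^ 2 + (a - c) ^ 2 / (a * c ^ 2) := by
  field_simp
  ring

section HarmonicMean

open Finset

variable {ι : Type*} {s : Finset ι} {a : ι → ℝ} {c : ℝ}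

theorem sum_inv_eq_card_div_add_sum_sq_div (ha : ∀ i ∈ s, a i ≠ 0) (hc : c ≠ 0)
    (hsum : ∑ i ∈ s, a i = #s * c) :
    ∑ i ∈ s, (a i)⁻¹ = #s / c + ∑ i ∈ s, (a i - c) ^ 2 / (a i * c ^ 2) := by
  have htangent : ∑ i ∈ s, (2 * c - a i) / c ^ 2 = #s / c := by
    rw [← sum_div, sum_sub_distrib, hsum, sum_const, nsmul_eq_mul]
    field_simp
    ring
  rw [← htangent, ← sum_add_distrib]
  exact sum_congr rfl fun i hi => inv_eq_tangent_add_sq_div (ha i hi) hc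

theorem card_div_le_sum_inv (ha : ∀ i ∈ s, 0 < a i) (hc : 0 < c)
    (hsum : ∑ i ∈ s, a i = #s * c) : #s / c ≤ ∑ i ∈ s, (a i)⁻¹ := by
  rw [sum_inv_eq_card_div_add_sum_sq_div (fun i hi => (ha i hi).ne') hc.ne' hsum]
  refine le_add_of_nonneg_right (sum_nonneg fun i hi => ?_)
  have := ha i hi
  positivity

theorem sum_inv_eq_card_div_iff (ha : ∀ i ∈ s, 0 < a i) (hc : 0 < c)
    (hsum : ∑ i ∈ s, a i = #s * c) : ∑ i ∈ s, (a i)⁻¹ = #s / c ↔ ∀ i ∈ s, a i = c := by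
  have hnonneg : ∀ i ∈ s, 0 ≤ (a i - c) ^ 2 / (a i * c ^ 2) := fun i hi => by
    have := ha i hi
    positivity
  rw [sum_inv_eq_card_div_add_sum_sq_div (fun i hi => (ha i hi).ne') hc.ne' hsum,
    add_eq_left, sum_eq_zero_iff_of_nonneg hnonneg]
  refine forall₂_congr fun i hi => ?_
  rw [div_eq_zero_iff, or_iff_left (by have := ha i hi; positivity), sq_eq_zero_iff, sub_eq_zero]

end HarmonicMean

theorem stmt14 (K M : ℕ) (hK : 0 < K) (hM : 0 < M) (ES γ ξ : ℝ)
    (hE : 0 < ES) (hγ : 0 < γ) (hξ : 0 < ξ)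
    (G : Matrix (Fin K) (Fin M) ℂ)
    (hnorm : ∑ k : Fin K, ∑ l : Fin M, ‖G k l‖ ^ 2 = ((K * M : ℕ) : ℝ) * ξ) :
    ES / (γ * ξ + 1) ≤
        (ES / γ) * ((1 / ((K * M : ℕ) : ℝ)) *
          ∑ k : Fin K, ∑ l : Fin M, (‖G k l‖ ^ 2 + γ⁻¹)⁻¹) ∧
      ((ES / γ) * ((1 / ((K * M : ℕ) : ℝ)) *
          ∑ k : Fin K, ∑ l : Fin M, (‖G k l‖ ^ 2 + γ⁻¹)⁻¹) = ES / (γ * ξ + 1) ↔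
        ∀ (k : Fin K) (l : Fin M), ‖G k l‖ = Real.sqrt ξ) := by
  set D : ℝ := ((K * M : ℕ) : ℝ)
  set a : Fin K × Fin M → ℝ := fun p => ‖G p.1 p.2‖ ^ 2 + γ⁻¹
  have hD : 0 < D := by positivity
  have ha : ∀ p ∈ Finset.univ, 0 < a p := fun p _ => by positivity
  have hcard : ((Finset.univ : Finset (Fin K × Fin M)).card : ℝ) = D := by simp [D]
  have hsum : ∑ p, a p = (Finset.univ : Finset (Fin K × Fin M)).card * (ξ + γ⁻¹) := by
    rw [hcard]
    calc ∑ p, a p = ∑ p : Fin K × Fin M, ‖G p.1 p.2‖ ^ 2 + ∑ _p : Fin K × Fin M, γ⁻¹ :=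
          Finset.sum_add_distrib
      _ = D * ξ + D * γ⁻¹ := by
          rw [Fintype.sum_prod_type' (fun k l => ‖G k l‖ ^ 2), hnorm, Finset.sum_const,
            nsmul_eq_mul, hcard]
      _ = D * (ξ + γ⁻¹) := by ring
  have hS : ∑ k : Fin K, ∑ l : Fin M, (‖G k l‖ ^ 2 + γ⁻¹)⁻¹ = ∑ p, (a p)⁻¹ :=
    (Fintype.sum_prod_type' fun k l => (‖G k l‖ ^ 2 + γ⁻¹)⁻¹).symm
  have hscale : ES / (γ * ξ + 1) = ES / γ * (1 / D * (D / (ξ + γ⁻¹))) := by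
    field_simp
  have hlower := card_div_le_sum_inv ha (by positivity) hsum
  have hiff := sum_inv_eq_card_div_iff ha (by positivity) hsum
  rw [hcard] at hlower hiff
  rw [hS, hscale, mul_right_inj' (by positivity), mul_right_inj' (by positivity), hiff]
  refine ⟨by gcongr, ?_⟩
  simp only [Finset.mem_univ, true_implies, Prod.forall, a, add_left_inj]
  exact forall₂_congr fun k l => by
    rw [eq_comm, ← Real.sqrt_eq_iff_eq_sq hξ.le (norm_nonneg _), eq_comm]

end GFDM
end
end

section
/- Fix positive integers K, M, D = KM, N₀ > 0, ξ > 0, and positive reals α_0,...,α_{M-1}. For a K×M matrix G with no zero entries and ‖G‖_F² = Dξ, define σ²(G) = (N₀/(K·D))·Σ_{k=0}^{K-1}Σ_{l=0}^{M-1} α_l / |G_{k,l}|². Then σ²(G) ≥ (N₀/(K·M²·ξ))·(Σ_{l=0}^{M-1} sqrt(α_l))², with equality if and only if |G_{k,l}|²/sqrt(α_l) is constant in both k and l. -/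
open Complex Matrix BigOperators Kronecker

noncomputable section

namespace Finset

variable {ι : Type*} (s : Finset ι) (f g : ι → ℝ)

theorem sum_sq_div_sub_sq_sum_div (hg : ∀ i ∈ s, g i ≠ 0) (hs : ∑ i ∈ s, g i ≠ 0) :
    ∑ i ∈ s, f i ^ 2 / g i - (∑ i ∈ s, f i) ^ 2 / ∑ i ∈ s, g i =
      ∑ i ∈ s, g i * (f i / g i - (∑ j ∈ s, f j) / ∑ j ∈ s, g j) ^ 2 := by
  set r := (∑ j ∈ s, f j) / ∑ j ∈ s, g j with hr
  have hterm : ∀ i ∈ s, g i * (f i / g i - r) ^ 2 = f i ^ 2 / g i - 2 * r * f i + r ^ 2 * g i :=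
    fun i hi => by field_simp [hg i hi]; ring
  rw [sum_congr rfl hterm, sum_add_distrib, sum_sub_distrib, ← mul_sum, ← mul_sum, hr]
  field_simp
  ring

theorem sq_sum_div_eq_sum_sq_div_iff (hg : ∀ i ∈ s, 0 < g i) :
    (∑ i ∈ s, f i) ^ 2 / ∑ i ∈ s, g i = ∑ i ∈ s, f i ^ 2 / g i ↔
      ∃ c, ∀ i ∈ s, f i = c * g i := by
  rcases s.eq_empty_or_nonempty with rfl | hne
  · simp
  have hpos : 0 < ∑ i ∈ s, g i := sum_pos hg hne
  constructor
  · intro heq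
    refine ⟨(∑ j ∈ s, f j) / ∑ j ∈ s, g j, fun i hi => ?_⟩
    have hzero := sum_sq_div_sub_sq_sum_div s f g (fun i hi => (hg i hi).ne') hpos.ne'
    rw [heq, sub_self, eq_comm, sum_eq_zero_iff_of_nonneg
      (fun i hi => mul_nonneg (hg i hi).le (sq_nonneg _))] at hzero
    have := hzero i hi
    rw [mul_eq_zero, or_iff_right (hg i hi).ne', sq_eq_zero_iff, sub_eq_zero,
      div_eq_iff (hg i hi).ne'] at this
    linarith
  · rintro ⟨c, hc⟩
    have hterm : ∀ i ∈ s, f i ^ 2 / g i = c ^ 2 * g i :=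
      fun i hi => by rw [hc i hi]; field_simp [(hg i hi).ne']
    rw [sum_congr rfl hc, sum_congr rfl hterm, ← mul_sum, ← mul_sum]
    field_simp

end Finset

theorem exists_eq_mul_iff_exists_div_eq {ι : Type*} {f g : ι → ℝ} (hf : ∀ i, f i ≠ 0)
    (hg : ∀ i, g i ≠ 0) : (∃ c, ∀ i, f i = c * g i) ↔ ∃ c, ∀ i, g i / f i = c := by
  constructor
  · rintro ⟨c, hc⟩
    refine ⟨c⁻¹, fun i => ?_⟩
    have hc0 : c ≠ 0 := by rintro rfl; exact hf i (by simpa using hc i)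
    rw [hc i]
    field_simp [hg i]
  · rintro ⟨c, hc⟩
    refine ⟨c⁻¹, fun i => ?_⟩
    rw [← hc i]
    field_simp [hf i, hg i]

namespace GFDM

theorem stmt15 (K M : ℕ) (hK : 0 < K) (hM : 0 < M) (N₀ ξ : ℝ) (hN : 0 < N₀) (hξ : 0 < ξ)
    (α : Fin M → ℝ) (hα : ∀ l, 0 < α l)
    (G : Matrix (Fin K) (Fin M) ℂ) (h0 : ∀ (k : Fin K) (l : Fin M), G k l ≠ 0)
    (hnorm : ∑ k : Fin K, ∑ l : Fin M, ‖G k l‖ ^ 2 = ((K * M : ℕ) : ℝ) * ξ) :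
    (N₀ / ((K : ℝ) * (M : ℝ) ^ 2 * ξ)) * (∑ l : Fin M, Real.sqrt (α l)) ^ 2 ≤
        (N₀ / ((K : ℝ) * ((K * M : ℕ) : ℝ))) *
          ∑ k : Fin K, ∑ l : Fin M, α l / ‖G k l‖ ^ 2 ∧
      ((N₀ / ((K : ℝ) * ((K * M : ℕ) : ℝ))) *
          ∑ k : Fin K, ∑ l : Fin M, α l / ‖G k l‖ ^ 2 =
          (N₀ / ((K : ℝ) * (M : ℝ) ^ 2 * ξ)) * (∑ l : Fin M, Real.sqrt (α l)) ^ 2 ↔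
        ∃ c : ℝ, ∀ (k : Fin K) (l : Fin M),
          ‖G k l‖ ^ 2 / Real.sqrt (α l) = c) := by
  set T := ∑ l : Fin M, Real.sqrt (α l)
  set f : Fin K × Fin M → ℝ := fun p => Real.sqrt (α p.2)
  set g : Fin K × Fin M → ℝ := fun p => ‖G p.1 p.2‖ ^ 2
  have hg : ∀ p ∈ Finset.univ, 0 < g p := fun p _ => pow_pos (norm_pos_iff.2 (h0 p.1 p.2)) 2
  have hsum_f : ∑ p, f p = K * T := by simp [f, T, Fintype.sum_prod_type]
  have hsum_g : ∑ p, g p = ((K * M : ℕ) : ℝ) * ξ := by rw [Fintype.sum_prod_type, hnorm]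
  have hsum_sq_div : ∑ p, f p ^ 2 / g p = ∑ k : Fin K, ∑ l : Fin M, α l / ‖G k l‖ ^ 2 := by
    simp only [f, g, Fintype.sum_prod_type, Real.sq_sqrt (hα _).le]
  have hbound : N₀ / ((K : ℝ) * (M : ℝ) ^ 2 * ξ) * T ^ 2 =
      N₀ / (K * ((K * M : ℕ) : ℝ)) * ((∑ p, f p) ^ 2 / ∑ p, g p) := by
    rw [hsum_f, hsum_g]
    push_cast
    field_simp
  have hc₀ : 0 < N₀ / (K * ((K * M : ℕ) : ℝ)) := by positivity
  rw [hbound, ← hsum_sq_div, mul_right_inj' hc₀.ne', eq_comm,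
    Finset.sq_sum_div_eq_sum_sq_div_iff _ _ _ hg]
  refine ⟨mul_le_mul_of_nonneg_left (Finset.sq_sum_div_le_sum_sq_div _ _ hg) hc₀.le, ?_⟩
  simp only [Finset.mem_univ, true_implies]
  rw [exists_eq_mul_iff_exists_div_eq (fun p => (Real.sqrt_pos.2 (hα p.2)).ne')
    (fun p => (hg p (Finset.mem_univ _)).ne')]
  simp only [g, Prod.forall]

end GFDM
end
end

section
/- Let K, M be even positive integers, D = KM, and let g ∈ C^D be even-symmetric: g_n = g_{D-n} for n = 1,...,D-1. Then the characteristic matrix G = sqrt(D)·reshape(g,K,M)·W_M satisfies G_{K/2, M/2} = 0; consequently, the corresponding GFDM matrix A is singular. -/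
open Complex Matrix BigOperators Kronecker

noncomputable section

namespace GFDM

/-! For `k₀ = K/2` and even `M`, the alternating sum `S = ∑ₘ (-1)^m g(k₀ + mK)` vanishes:
the symmetry `g n = g (-n)` sends the index `k₀ + mK` to `k₀ + (M-1-m)K`, while
`(-1)^(M-1-m) = -(-1)^m`. As the `M/2`-th column of `W_M` is `((-1)^m / √M)ₘ`, the entry
`G_{K/2, M/2}` is a multiple of `S`. In the GFDM matrix, the alternating combination of the rows
`k₀ + mK` has, in column `l + jK`, the entry `(-1)^j S` times a phase, so these `M` rows are
linearly dependent. -/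

theorem _root_.Fin.sum_neg_one_pow_mul_eq_zero_of_rev {R : Type*} [Ring R] {M : ℕ}
    (hM : Even M) (f : Fin M → R) (hf : ∀ m, f m.rev = f m) :
    ∑ m : Fin M, (-1 : R) ^ (m : ℕ) * f m = 0 := by
  obtain ⟨t, rfl⟩ := hM
  refine Finset.sum_ninvolution Fin.rev (fun m => ?_) (fun m _ => ?_)
    (fun _ => Finset.mem_univ _) Fin.rev_rev
  · have hodd : Odd ((m : ℕ) + m.rev) := ⟨t - 1, by rw [Fin.val_rev]; omega⟩
    have hsign : (-1 : R) ^ (m.rev : ℕ) = -(-1) ^ (m : ℕ) := by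
      calc (-1 : R) ^ (m.rev : ℕ) = (-1) ^ ((m : ℕ) + m.rev + m) := by
            rw [show (m : ℕ) + m.rev + m = m.rev + 2 * m by ring, pow_add, pow_mul, neg_one_sq,
              one_pow, mul_one]
        _ = (-1) ^ ((m : ℕ) + m.rev) * (-1) ^ (m : ℕ) := pow_add _ _ _
        _ = -(-1) ^ (m : ℕ) := by rw [hodd.neg_one_pow, neg_one_mul]
    rw [hf, hsign, neg_mul, add_neg_cancel]
  · intro h
    have := congrArg Fin.val h
    rw [Fin.val_rev] at this
    omega

theorem _root_.Fin.sum_neg_one_pow_mul_comp_sub {R : Type*} [CommRing R] {M : ℕ}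
    (hM : Even M) (f : Fin M → R) (j : Fin M) :
    ∑ m : Fin M, (-1 : R) ^ (m : ℕ) * f (m - j) =
      (-1) ^ (j : ℕ) * ∑ m : Fin M, (-1) ^ (m : ℕ) * f m := by
  have : NeZero M := NeZero.of_pos j.pos
  rw [← Equiv.sum_comp (Equiv.addRight j), Finset.mul_sum]
  refine Finset.sum_congr rfl fun m _ => ?_
  have hpow : (-1 : R) ^ ((m + j : Fin M) : ℕ) = (-1) ^ (m : ℕ) * (-1) ^ (j : ℕ) := by
    rw [Fin.val_add, neg_one_pow_eq_pow_mod_two, Nat.mod_mod_of_dvd _ (even_iff_two_dvd.1 hM),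
      ← neg_one_pow_eq_pow_mod_two, pow_add]
  rw [Equiv.coe_addRight, add_sub_cancel_right, hpow]
  ring

theorem _root_.Matrix.not_isUnit_of_sum_smul_row_eq_zero {n ι R : Type*} [Fintype n]
    [DecidableEq n] [Fintype ι] [Ring R] {A : Matrix n n R} {e : ι → n}
    (he : Function.Injective e) {c : ι → R} (hc : c ≠ 0) (h : ∑ i, c i • A (e i) = 0) :
    ¬IsUnit A := fun hA =>
  hc <| funext fun i =>
    Fintype.linearIndependent_iff.1 ((linearIndependent_rows_of_isUnit hA).comp e he) c h i

theorem W_apply_of_val_eq_half {M : ℕ} (hM : Even M) (m j : Fin M) (hj : (j : ℕ) = M / 2) :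
    W M m j = (-1) ^ (m : ℕ) / (Real.sqrt M : ℂ) := by
  obtain ⟨t, rfl⟩ := hM
  have ht : (t : ℂ) ≠ 0 := by
    have := j.isLt
    exact_mod_cast (show t ≠ 0 by omega)
  have harg : -2 * Real.pi * I * (m : ℕ) * (j : ℕ) / ((t + t : ℕ) : ℂ) =
      (m : ℕ) * -(Real.pi * I) := by
    rw [hj, show (t + t) / 2 = t by omega]
    push_cast
    field_simp
    ring
  rw [W, harg, exp_nat_mul, exp_neg, exp_pi_mul_I]
  norm_num

variable {K M : ℕ}

theorem vecIdx_injective (k : Fin K) : Function.Injective (vecIdx (M := M) k) := by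
  intro m m' h
  have hK : 0 < K := k.pos
  have := congrArg Fin.val h
  simp only [vecIdx, Nat.add_left_cancel_iff] at this
  exact Fin.ext (Nat.eq_of_mul_eq_mul_right hK this)

theorem exists_vecIdx_eq (n : Fin (K * M)) : ∃ k m, vecIdx (M := M) k m = n := by
  have hK : 0 < K := Nat.pos_of_mul_pos_right n.pos
  refine ⟨⟨n % K, Nat.mod_lt _ hK⟩, ⟨n / K, Nat.div_lt_of_lt_mul n.isLt⟩, Fin.ext ?_⟩
  exact Nat.mod_add_div' n K

variable {g : Fin (K * M) → ℂ}

theorem reshape_rev_of_val_eq_half (hK : Even K) (hg : ∀ n, g (-n) = g n) (k : Fin K)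
    (hk : (k : ℕ) = K / 2) (m : Fin M) : reshape K M g k m.rev = reshape K M g k m := by
  obtain ⟨t, rfl⟩ := hK
  have hmK : (m : ℕ) * (t + t) + (t + t) ≤ M * (t + t) := by nlinarith [m.isLt]
  unfold reshape
  rw [← hg]
  refine congrArg g (Fin.ext ?_)
  simp only [Fin.val_rev, Fin.val_neg', hk]
  rw [Nat.sub_mul, Nat.mul_comm (t + t) M, Nat.succ_mul, show (t + t) / 2 = t by omega,
    Nat.mod_eq_of_lt (by omega)]
  omega

theorem sum_neg_one_pow_mul_reshape_eq_zero (hK : Even K) (hM : Even M)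
    (hg : ∀ n, g (-n) = g n) (k : Fin K) (hk : (k : ℕ) = K / 2) :
    ∑ m : Fin M, (-1 : ℂ) ^ (m : ℕ) * reshape K M g k m = 0 :=
  Fin.sum_neg_one_pow_mul_eq_zero_of_rev hM _ (reshape_rev_of_val_eq_half hK hg k hk)

theorem charMatrix_apply_of_val_eq_half (hM : Even M) (k : Fin K) (j : Fin M)
    (hj : (j : ℕ) = M / 2) :
    charMatrix K M g k j =
      (Real.sqrt (K * M) / Real.sqrt M : ℂ) *
        ∑ m : Fin M, (-1) ^ (m : ℕ) * reshape K M g k m := by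
  simp only [charMatrix, Matrix.smul_apply, mul_apply, W_apply_of_val_eq_half hM _ j hj,
    smul_eq_mul, Finset.mul_sum]
  refine Finset.sum_congr rfl fun m _ => ?_
  ring

theorem gfdmMatrix_vecIdx_vecIdx (k l : Fin K) (m j : Fin M) :
    gfdmMatrix K M g (vecIdx k m) (vecIdx l j) =
      reshape K M g k (m - j) * exp (2 * Real.pi * I * (l : ℕ) * (k : ℕ) / K) := by
  have hK : 0 < K := k.pos
  have hK' : (K : ℂ) ≠ 0 := Nat.cast_ne_zero.2 hK.ne'
  have hlj : ((l : ℕ) + j * K) / K = j := by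
    rw [Nat.add_mul_div_right _ _ hK, Nat.div_eq_of_lt l.isLt, zero_add]
  have hl : ((l : ℕ) + j * K) % K = l := by
    rw [Nat.add_mul_mod_self_right, Nat.mod_eq_of_lt l.isLt]
  unfold gfdmMatrix reshape
  congr 1
  · refine congrArg g (Fin.ext ?_)
    have hjK : (j : ℕ) * K ≤ M * K := Nat.mul_le_mul_right K j.isLt.le
    have hshift : (k : ℕ) + m * K + K * M - j * K = k + (M - j + m) * K := by
      rw [Nat.add_mul, Nat.sub_mul, Nat.mul_comm K M]
      omega
    simp only [vecIdx, hlj, Fin.sub_def, hshift, Nat.mod_mul, Nat.add_mul_mod_self_right,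
      Nat.mod_eq_of_lt k.isLt, Nat.add_mul_div_right _ _ hK, Nat.div_eq_of_lt k.isLt, zero_add]
    exact congrArg _ (Nat.mul_comm _ _)
  · simp only [vecIdx, hl]
    refine exp_eq_exp_iff_exists_int.2 ⟨l * m, ?_⟩
    push_cast
    field_simp

theorem sum_neg_one_pow_smul_gfdmMatrix_row_eq_zero (hM : Even M) (k : Fin K)
    (hk : ∑ m : Fin M, (-1 : ℂ) ^ (m : ℕ) * reshape K M g k m = 0) :
    ∑ m : Fin M, (-1 : ℂ) ^ (m : ℕ) • gfdmMatrix K M g (vecIdx k m) = 0 := by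
  funext c
  obtain ⟨l, j, rfl⟩ := exists_vecIdx_eq c
  simp only [Finset.sum_apply, Pi.smul_apply, smul_eq_mul, gfdmMatrix_vecIdx_vecIdx,
    Pi.zero_apply, ← mul_assoc, ← Finset.sum_mul, Fin.sum_neg_one_pow_mul_comp_sub hM, hk,
    mul_zero, zero_mul]

theorem stmt17 (K M : ℕ) (hK : 0 < K) (hM : 0 < M) (hKe : K % 2 = 0) (hMe : M % 2 = 0)
    (g : Fin (K * M) → ℂ)
    (hsym : ∀ n : Fin (K * M),
      g n = g ⟨(K * M - n.val) % (K * M), Nat.mod_lt _ (Nat.mul_pos hK hM)⟩) :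
    charMatrix K M g ⟨K / 2, Nat.div_lt_self hK one_lt_two⟩
        ⟨M / 2, Nat.div_lt_self hM one_lt_two⟩ = 0 ∧
      ¬ IsUnit (gfdmMatrix K M g) := by
  set k₀ : Fin K := ⟨K / 2, Nat.div_lt_self hK one_lt_two⟩
  have hKe : Even K := Nat.even_iff.2 hKe
  have hMe : Even M := Nat.even_iff.2 hMe
  -- `-n : Fin (K * M)` unfolds to `⟨(K * M - n) % (K * M), _⟩`, so `hsym` reads `g n = g (-n)`.
  have hsum := sum_neg_one_pow_mul_reshape_eq_zero hKe hMe (fun n => (hsym n).symm) k₀ rfl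
  refine ⟨?_, ?_⟩
  · rw [charMatrix_apply_of_val_eq_half hMe k₀ _ rfl, hsum, mul_zero]
  · refine Matrix.not_isUnit_of_sum_smul_row_eq_zero (vecIdx_injective k₀) (fun h => ?_)
      (sum_neg_one_pow_smul_gfdmMatrix_row_eq_zero hMe k₀ hsum)
    simpa using congrFun h ⟨0, hM⟩

end GFDM
end
end

section
/- Let A be a unitary D×D matrix (D = KM), C = W_D^H·D_C·W_D with D_C a diagonal matrix with nonzero diagonal entries C_0,...,C_{D-1}, and γ > 0. Then the MMSE matrix B = A^H C^H (C A A^H C^H + γ^{-1} I_D)^{-1} equals A^{-1}·C^{-1}·W_D^H·diag(|C_0|²/(|C_0|²+γ^{-1}),...,|C_{D-1}|²/(|C_{D-1}|²+γ^{-1}))·W_D; equivalently B = [C A + γ^{-1}(C A)^{-H}]^{-1} and B = A^H·W_D^H·diag(C_l^*/(|C_l|²+γ^{-1}))_l·W_D. -/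
/-!
Since `W_D` is unitary (orthogonality of the additive characters of `ZMod D`), conjugation
`d ↦ W_Dᴴ diag(d) W_D` turns pointwise operations on vectors into the corresponding matrix
operations: products, sums, scalar multiples, conjugate transposes and (for nowhere vanishing `d`)
inverses. With `A Aᴴ = 1` the middle factor of the MMSE matrix is `W_Dᴴ diag(|C_l|² + γ⁻¹) W_D`,
so all three expressions for `B` reduce to `Aᴴ W_Dᴴ diag(C_l^* / (|C_l|² + γ⁻¹)) W_D`, and the
claimed identities become scalar identities in each tone `l`.
-/

open Complex Matrix BigOperators Kronecker

noncomputable section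

namespace Matrix

variable {n α : Type*} [Fintype n] [DecidableEq n]

section CommRing

variable [CommRing α] [StarRing α]

def conjDiagonal (U : Matrix n n α) (d : n → α) : Matrix n n α :=
  Uᴴ * diagonal d * U

lemma conjDiagonal_mul {U : Matrix n n α} (hU : U ∈ unitaryGroup n α) (d e : n → α) :
    conjDiagonal U d * conjDiagonal U e = conjDiagonal U (d * e) := by
  have hUU : U * Uᴴ = 1 := mem_unitaryGroup_iff.mp hU
  simp only [conjDiagonal, Matrix.mul_assoc]
  rw [← Matrix.mul_assoc U, hUU, Matrix.one_mul, ← Matrix.mul_assoc (diagonal d),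
    diagonal_mul_diagonal]
  rfl

lemma conjDiagonal_add (U : Matrix n n α) (d e : n → α) :
    conjDiagonal U d + conjDiagonal U e = conjDiagonal U (d + e) := by
  simp only [conjDiagonal, ← Matrix.add_mul, ← Matrix.mul_add, diagonal_add]
  rfl

lemma smul_conjDiagonal (U : Matrix n n α) (x : α) (d : n → α) :
    x • conjDiagonal U d = conjDiagonal U (x • d) := by
  rw [conjDiagonal, conjDiagonal, diagonal_smul, Matrix.mul_smul, Matrix.smul_mul]

lemma conjDiagonal_const {U : Matrix n n α} (hU : U ∈ unitaryGroup n α) (x : α) :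
    conjDiagonal U (fun _ => x) = x • 1 := by
  rw [conjDiagonal, ← smul_one_eq_diagonal, Matrix.mul_smul, Matrix.smul_mul, Matrix.mul_one,
    ← star_eq_conjTranspose, mem_unitaryGroup_iff'.mp hU]

lemma conjTranspose_conjDiagonal (U : Matrix n n α) (d : n → α) :
    (conjDiagonal U d)ᴴ = conjDiagonal U (star d) := by
  rw [conjDiagonal, conjDiagonal, conjTranspose_mul, conjTranspose_mul, conjTranspose_conjTranspose,
    diagonal_conjTranspose, Matrix.mul_assoc]

end CommRing

section Field

variable [Field α] [StarRing α]

lemma inv_conjDiagonal {U : Matrix n n α} (hU : U ∈ unitaryGroup n α) {d : n → α}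
    (hd : ∀ i, d i ≠ 0) : (conjDiagonal U d)⁻¹ = conjDiagonal U d⁻¹ := by
  refine inv_eq_right_inv ?_
  rw [conjDiagonal_mul hU, show d * d⁻¹ = fun _ => 1 from funext fun i => mul_inv_cancel₀ (hd i),
    conjDiagonal_const hU, one_smul]

variable {A U : Matrix n n α}

lemma mmse_eq_conjDiagonal (hA : A ∈ unitaryGroup n α) (hU : U ∈ unitaryGroup n α)
    (d : n → α) {g : α} (hs : ∀ i, d i * star (d i) + g ≠ 0) :
    Aᴴ * (conjDiagonal U d)ᴴ * (conjDiagonal U d * A * Aᴴ * (conjDiagonal U d)ᴴ + g • 1)⁻¹ =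
      Aᴴ * conjDiagonal U (fun i => star (d i) / (d i * star (d i) + g)) := by
  have hmid : conjDiagonal U d * A * Aᴴ * (conjDiagonal U d)ᴴ + g • 1 =
      conjDiagonal U (fun i => d i * star (d i) + g) := by
    have hAA : A * Aᴴ = 1 := mem_unitaryGroup_iff.mp hA
    rw [Matrix.mul_assoc _ A, hAA, Matrix.mul_one,
      conjTranspose_conjDiagonal, conjDiagonal_mul hU, ← conjDiagonal_const hU, conjDiagonal_add]
    rfl
  rw [hmid, inv_conjDiagonal hU hs, conjTranspose_conjDiagonal, Matrix.mul_assoc,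
    conjDiagonal_mul hU]
  congr 2 with i
  exact (div_eq_mul_inv _ _).symm

lemma inv_conjDiagonal_mul_add_smul (hA : A ∈ unitaryGroup n α) (hU : U ∈ unitaryGroup n α)
    {d : n → α} (hd : ∀ i, d i ≠ 0) {g : α} (hs : ∀ i, d i * star (d i) + g ≠ 0) :
    (conjDiagonal U d * A + g • ((conjDiagonal U d * A)⁻¹)ᴴ)⁻¹ =
      Aᴴ * conjDiagonal U (fun i => star (d i) / (d i * star (d i) + g)) := by
  have hAinv : A⁻¹ = Aᴴ := inv_eq_right_inv (mem_unitaryGroup_iff.mp hA)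
  have hstar : ∀ i, star (d i) ≠ 0 := fun i => star_ne_zero.mpr (hd i)
  have hscalar : ∀ i, (d + g • star d⁻¹) i = (d i * star (d i) + g) / star (d i) := by
    intro i
    rw [Pi.add_apply, Pi.smul_apply, smul_eq_mul, Pi.star_apply, Pi.inv_apply, star_inv₀]
    field_simp [hstar i]
  have ht : ∀ i, (d + g • star d⁻¹) i ≠ 0 := fun i => by
    rw [hscalar]
    exact div_ne_zero (hs i) (hstar i)
  rw [mul_inv_rev, hAinv, inv_conjDiagonal hU hd, conjTranspose_mul, conjTranspose_conjTranspose,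
    conjTranspose_conjDiagonal, ← Matrix.smul_mul, smul_conjDiagonal, ← Matrix.add_mul,
    conjDiagonal_add, mul_inv_rev, hAinv, inv_conjDiagonal hU ht]
  congr 2 with i
  rw [Pi.inv_apply, hscalar, inv_div]

lemma conjTranspose_mul_conjDiagonal_eq_inv_mul_inv_mul (hA : A ∈ unitaryGroup n α)
    (hU : U ∈ unitaryGroup n α) {d : n → α} (hd : ∀ i, d i ≠ 0) (e : n → α) :
    Aᴴ * conjDiagonal U e = A⁻¹ * (conjDiagonal U d)⁻¹ * conjDiagonal U (d * e) := by
  have hAinv : A⁻¹ = Aᴴ := inv_eq_right_inv (mem_unitaryGroup_iff.mp hA)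
  have hdd : d⁻¹ * d = 1 := funext fun i => inv_mul_cancel₀ (hd i)
  rw [hAinv, inv_conjDiagonal hU hd, Matrix.mul_assoc, conjDiagonal_mul hU, ← mul_assoc, hdd,
    one_mul]

end Field

end Matrix

namespace GFDM

open ZMod in
lemma W_apply_eq_stdAddChar (p : ℕ) [NeZero p] (m n : Fin p) :
    W p m n = stdAddChar (-((m : ℕ) * (n : ℕ) : ZMod p)) / (Real.sqrt p : ℂ) := by
  have h := stdAddChar_coe (N := p) (-((m : ℕ) * (n : ℕ) : ℤ))
  push_cast at h
  rw [W, h]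
  ring_nf

lemma sum_fin_natCast_eq_sum_zmod {β : Type*} [AddCommMonoid β] (p : ℕ) [NeZero p]
    (f : ZMod p → β) : ∑ j : Fin p, f (j : ℕ) = ∑ x : ZMod p, f x := by
  obtain ⟨p, rfl⟩ := Nat.exists_eq_succ_of_ne_zero (NeZero.ne p)
  exact Finset.sum_congr rfl fun x _ => congrArg f (Fin.cast_val_eq_self x)

open ZMod in
lemma W_mul_conjTranspose (p : ℕ) : W p * (W p)ᴴ = 1 := by
  rcases Nat.eq_zero_or_pos p with rfl | hp
  · exact Subsingleton.elim _ _
  have : NeZero p := ⟨hp.ne'⟩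
  have hsqrt : (Real.sqrt p : ℂ) * (Real.sqrt p : ℂ) = p := by
    rw [← Complex.ofReal_mul, Real.mul_self_sqrt (Nat.cast_nonneg p), Complex.ofReal_natCast]
  ext m n
  have hterm : ∀ j : Fin p, W p m j * star (W p n j)
      = stdAddChar (((j : ℕ) : ZMod p) * ((n : ℕ) - (m : ℕ) : ZMod p)) / p := by
    intro j
    rw [W_apply_eq_stdAddChar, W_apply_eq_stdAddChar, star_div₀, Complex.star_def,
      ← AddChar.map_neg_eq_conj, Complex.conj_ofReal, div_mul_div_comm, hsqrt,
      ← AddChar.map_add_eq_mul]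
    ring_nf
  have horth := AddChar.sum_mulShift ((n : ℕ) - (m : ℕ) : ZMod p) (isPrimitive_stdAddChar p)
  simp only [mul_apply, conjTranspose_apply, hterm, ← Finset.sum_div,
    sum_fin_natCast_eq_sum_zmod p (fun x => stdAddChar (x * ((n : ℕ) - (m : ℕ) : ZMod p))),
    horth, ZMod.card, sub_eq_zero, ZMod.natCast_eq_natCast_iff', Nat.mod_eq_of_lt m.isLt,
    Nat.mod_eq_of_lt n.isLt, Fin.val_inj, one_apply, eq_comm (a := n)]
  split_ifs <;> simp [NeZero.ne p]

theorem stmt18_general (K M : ℕ)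
    (A : Matrix (Fin (K * M)) (Fin (K * M)) ℂ)
    (hA : A ∈ Matrix.unitaryGroup (Fin (K * M)) ℂ)
    (c : Fin (K * M) → ℂ) (hc : ∀ l, c l ≠ 0) (γ : ℝ) (hγ : 0 < γ) :
    let C := (W (K * M))ᴴ * Matrix.diagonal c * W (K * M)
    let B := Aᴴ * Cᴴ * (C * A * Aᴴ * Cᴴ + (γ : ℂ)⁻¹ • (1 : Matrix (Fin (K * M)) (Fin (K * M)) ℂ))⁻¹
    B = A⁻¹ * C⁻¹ * (W (K * M))ᴴ *
          Matrix.diagonal (fun l =>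
            ((‖c l‖ ^ 2 / (‖c l‖ ^ 2 + γ⁻¹) : ℝ) : ℂ)) *
          W (K * M) ∧
      B = (C * A + (γ : ℂ)⁻¹ • ((C * A)⁻¹)ᴴ)⁻¹ ∧
      B = Aᴴ * (W (K * M))ᴴ *
            Matrix.diagonal (fun l =>
              star (c l) / (((‖c l‖ ^ 2 : ℝ) : ℂ) + (γ : ℂ)⁻¹)) *
            W (K * M) := by
  intro C B
  have hW := W_mem_unitaryGroup (K * M)
  have hnorm : ∀ l, c l * star (c l) = ((‖c l‖ ^ 2 : ℝ) : ℂ) := fun l => by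
    push_cast
    exact Complex.mul_conj' (c l)
  have hs : ∀ l, c l * star (c l) + (γ : ℂ)⁻¹ ≠ 0 := fun l => by
    rw [hnorm, ← Complex.ofReal_inv, ← Complex.ofReal_add, Complex.ofReal_ne_zero]
    positivity
  have hB : B = Aᴴ * conjDiagonal (W (K * M))
      (fun l => star (c l) / (c l * star (c l) + (γ : ℂ)⁻¹)) :=
    mmse_eq_conjDiagonal hA hW c hs
  refine ⟨?_, hB.trans (inv_conjDiagonal_mul_add_smul hA hW hc hs).symm, ?_⟩
  · have he : (c * fun l => star (c l) / (c l * star (c l) + (γ : ℂ)⁻¹)) =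
        fun l => ((‖c l‖ ^ 2 / (‖c l‖ ^ 2 + γ⁻¹) : ℝ) : ℂ) := funext fun l => by
      rw [Pi.mul_apply, ← mul_div_assoc, hnorm]
      push_cast
      rfl
    rw [hB, conjTranspose_mul_conjDiagonal_eq_inv_mul_inv_mul hA hW hc, he]
    simp only [C, conjDiagonal, Matrix.mul_assoc]
  · rw [hB]
    simp only [conjDiagonal, Matrix.mul_assoc, hnorm]

theorem stmt18 (K M : ℕ) (hK : 0 < K) (hM : 0 < M)
    (A : Matrix (Fin (K * M)) (Fin (K * M)) ℂ)
    (hA : A ∈ Matrix.unitaryGroup (Fin (K * M)) ℂ)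
    (c : Fin (K * M) → ℂ) (hc : ∀ l, c l ≠ 0) (γ : ℝ) (hγ : 0 < γ) :
    let C := (W (K * M))ᴴ * Matrix.diagonal c * W (K * M)
    let B := Aᴴ * Cᴴ * (C * A * Aᴴ * Cᴴ + (γ : ℂ)⁻¹ • (1 : Matrix (Fin (K * M)) (Fin (K * M)) ℂ))⁻¹
    B = A⁻¹ * C⁻¹ * (W (K * M))ᴴ *
          Matrix.diagonal (fun l =>
            ((‖c l‖ ^ 2 / (‖c l‖ ^ 2 + γ⁻¹) : ℝ) : ℂ)) *
          W (K * M) ∧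
      B = (C * A + (γ : ℂ)⁻¹ • ((C * A)⁻¹)ᴴ)⁻¹ ∧
      B = Aᴴ * (W (K * M))ᴴ *
            Matrix.diagonal (fun l =>
              star (c l) / (((‖c l‖ ^ 2 : ℝ) : ℂ) + (γ : ℂ)⁻¹)) *
            W (K * M) :=
  stmt18_general K M A hA c hc γ hγ

end GFDM
end
end

section
/- Let A be an invertible GFDM matrix with characteristic matrix G having no zero entries, D = KM, and let C = W_D^H·D_C·W_D with invertible diagonal D_C. Set R_e = N₀·(W_D A^{-H})^H·D_C^{-1}D_C^{-H}·(W_D A^{-H}). Then the diagonal entries of R_e satisfy [R_e]_{k+mK,k+mK} is constant in m for each k (i.e., the zero-forcing error variance σ²_{k,m} does not depend on the subsymbol index m). -/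
/-!
The GFDM matrix is block circulant: its (m₁, m₂) block of size K depends only on m₁ - m₂, so it
is invariant under the simultaneous cyclic shift of rows and columns by K. This invariance passes
to the inverse and to the conjugate transpose, and the DFT turns the cyclic shift of a column by
mK into multiplication by the unimodular phases e^{-2πi l m / M}. Hence the columns k + mK of
B = W_D A^{-H} all have the same entrywise moduli, and since D_C^{-1} D_C^{-H} is diagonal,
[R_e]_{ii} = N₀ Σ_l |[D_C^{-1}]_{ll}|² |B_{l,i}|² only sees those moduli.
-/

open Complex Matrix BigOperators Kronecker

noncomputable section

namespace GFDM

lemma W_apply_add {p : ℕ} [NeZero p] (j a s : Fin p) :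
    W p j (a + s) = cexp (-2 * Real.pi * I * j * s / p) * W p j a := by
  have hp : (p : ℂ) ≠ 0 := NeZero.ne _
  have hval : ((a + s : Fin p) : ℂ) = a + s - p * ((a.val + s.val) / p : ℕ) := by
    rw [eq_sub_iff_add_eq, Fin.val_add]
    exact_mod_cast Nat.mod_add_div _ _
  simp only [W]
  set q := (a.val + s.val) / p
  rw [hval, mul_div_assoc', ← Complex.exp_add]
  congr 1
  rw [show -2 * Real.pi * I * j * (a + s - p * q) / p
      = (-2 * Real.pi * I * j * s / p + -2 * Real.pi * I * j * a / p)
        + (j * q : ℕ) * (2 * Real.pi * I)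
      by push_cast; field_simp; ring,
    Complex.exp_add _ (_ * _), Complex.exp_nat_mul_two_pi_mul_I, mul_one]

lemma norm_exp_neg_two_pi_I_mul_div (p x y : ℕ) :
    ‖cexp (-2 * Real.pi * I * x * y / p)‖ = 1 := by
  rw [Complex.norm_exp]
  simp

lemma star_exp_neg_two_pi_I_mul_self (p x y : ℕ) :
    star (cexp (-2 * Real.pi * I * x * y / p)) * cexp (-2 * Real.pi * I * x * y / p) = 1 := by
  rw [RCLike.star_def, Complex.conj_mul', norm_exp_neg_two_pi_I_mul_div]
  simp

lemma idx_add_idx_zero {K M : ℕ} [NeZero K] [NeZero M] (m₁ m : Fin M) (k : Fin K) :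
    idx K M (m₁, k) + idx K M (m, 0) = idx K M (m₁ + m, k) := by
  ext
  simp only [Fin.val_add, idx, Equiv.trans_apply, finProdFinEquiv_apply_val, finCongr_apply,
    Fin.val_cast, Fin.val_zero]
  have hlt : k.val + K * ((m₁.val + m.val) % M) < K * M := by
    have := Nat.mod_lt (m₁.val + m.val) (NeZero.pos M)
    nlinarith [k.isLt]
  have hsplit : k.val + K * m₁.val + (0 + K * m.val)
      = k.val + K * ((m₁.val + m.val) % M) + K * M * ((m₁.val + m.val) / M) := by
    have := Nat.mod_add_div (m₁.val + m.val) M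
    grind
  rw [hsplit, Nat.add_mul_mod_self_left, Nat.mod_eq_of_lt hlt]

lemma idx_eq_vecIdx {K M : ℕ} (k : Fin K) (m : Fin M) : idx K M (m, k) = vecIdx k m :=
  Fin.ext (by simp only [idx, Equiv.trans_apply, finProdFinEquiv_apply_val, finCongr_apply,
    Fin.val_cast, vecIdx]; ring)

lemma gfdmOfChar_idx_idx (K M : ℕ) (H : Matrix (Fin K) (Fin M) ℂ) (m₁ m₂ : Fin M)
    (k₁ k₂ : Fin K) :
    gfdmOfChar K M H (idx K M (m₁, k₁)) (idx K M (m₂, k₂)) =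
      star (W K k₂ k₁) * ∑ t : Fin M, star (W M t m₁) * H k₁ t * W M t m₂ := by
  simp only [gfdmOfChar, reindex_apply, submatrix_apply, Equiv.symm_apply_apply, mul_apply,
    diagonal_apply, kroneckerMap_apply, one_apply, conjTranspose_apply,
    Fintype.sum_prod_type, mul_ite, ite_mul, mul_zero, zero_mul, mul_one,
    Finset.sum_ite_eq, Finset.sum_ite_eq', Finset.mem_univ, if_true, Finset.mul_sum]
  exact Finset.sum_congr rfl fun t _ => by ring

lemma gfdmOfChar_submatrix_addRight {K M : ℕ} [NeZero K] [NeZero M]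
    (H : Matrix (Fin K) (Fin M) ℂ) (m : Fin M) :
    (gfdmOfChar K M H).submatrix (Equiv.addRight (idx K M (m, 0)))
      (Equiv.addRight (idx K M (m, 0))) = gfdmOfChar K M H := by
  ext i j
  obtain ⟨⟨m₁, k₁⟩, rfl⟩ := (idx K M).surjective i
  obtain ⟨⟨m₂, k₂⟩, rfl⟩ := (idx K M).surjective j
  simp only [submatrix_apply, Equiv.coe_addRight, idx_add_idx_zero, gfdmOfChar_idx_idx]
  congr 1
  refine Finset.sum_congr rfl fun t _ => ?_
  rw [W_apply_add, W_apply_add, star_mul]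
  linear_combination (star (W M t m₁) * H k₁ t * W M t m₂) *
    star_exp_neg_two_pi_I_mul_self M t m

lemma conjTranspose_inv_submatrix_of_submatrix_eq {ι R : Type*} [Fintype ι] [DecidableEq ι]
    [CommRing R] [StarRing R] {X : Matrix ι ι R} {e : ι ≃ ι} (hX : X.submatrix e e = X) :
    (X⁻¹)ᴴ.submatrix e e = (X⁻¹)ᴴ := by
  rw [← conjTranspose_submatrix, ← inv_submatrix_equiv, hX]

lemma W_mul_apply_add {p : ℕ} [NeZero p] {X : Matrix (Fin p) (Fin p) ℂ} {s : Fin p}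
    (hX : X.submatrix (Equiv.addRight s) (Equiv.addRight s) = X) (l j : Fin p) :
    (W p * X) l (j + s) = cexp (-2 * Real.pi * I * l * s / p) * (W p * X) l j := by
  simp only [mul_apply, Finset.mul_sum]
  rw [← Equiv.sum_comp (Equiv.addRight s)]
  refine Finset.sum_congr rfl fun i _ => ?_
  rw [← congrFun₂ hX i j]
  simp only [Equiv.coe_addRight, submatrix_apply, W_apply_add, mul_assoc]

lemma conjTranspose_mul_diagonal_mul_apply_self {ι n : Type*} [Fintype ι] [DecidableEq ι]
    (B : Matrix ι n ℂ) (d : ι → ℂ) (i : n) :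
    (Bᴴ * diagonal d * B) i i = ∑ l, d l * (‖B l i‖ : ℂ) ^ 2 := by
  rw [mul_apply]
  simp only [mul_diagonal, conjTranspose_apply]
  exact Finset.sum_congr rfl fun l _ => by rw [RCLike.star_def, ← Complex.conj_mul']; ring

theorem stmt19_general (K M : ℕ) (G : Matrix (Fin K) (Fin M) ℂ)
    (c : Fin (K * M) → ℂ) (N₀ : ℝ) :
    let A := gfdmOfChar K M G
    let Re := (N₀ : ℂ) •
      ((W (K * M) * (A⁻¹)ᴴ)ᴴ * (Matrix.diagonal c)⁻¹ * ((Matrix.diagonal c)⁻¹)ᴴ *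
        (W (K * M) * (A⁻¹)ᴴ))
    ∀ (k : Fin K) (m m' : Fin M),
      Re (vecIdx k m) (vecIdx k m) = Re (vecIdx k m') (vecIdx k m') := by
  intro A Re k m m'
  have : NeZero K := NeZero.of_pos k.pos
  have : NeZero M := NeZero.of_pos m.pos
  obtain ⟨d, hd⟩ : ∃ d, (diagonal c)⁻¹ * ((diagonal c)⁻¹)ᴴ = diagonal d :=
    ⟨_, by rw [inv_diagonal, diagonal_conjTranspose, diagonal_mul_diagonal]⟩
  have hshift : vecIdx k m' = vecIdx k m + idx K M (m' - m, 0) := by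
    rw [← idx_eq_vecIdx, ← idx_eq_vecIdx, idx_add_idx_zero, add_sub_cancel]
  have hinv : ((A⁻¹)ᴴ).submatrix (Equiv.addRight (idx K M (m' - m, 0)))
      (Equiv.addRight (idx K M (m' - m, 0))) = (A⁻¹)ᴴ :=
    conjTranspose_inv_submatrix_of_submatrix_eq (gfdmOfChar_submatrix_addRight G (m' - m))
  have hcol : ∀ l,
      ‖(W (K * M) * (A⁻¹)ᴴ) l (vecIdx k m)‖ = ‖(W (K * M) * (A⁻¹)ᴴ) l (vecIdx k m')‖ :=
    fun l => by
      rw [hshift, W_mul_apply_add hinv, norm_mul, norm_exp_neg_two_pi_I_mul_div, one_mul]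
  simp only [Re, Matrix.smul_apply, Matrix.mul_assoc _ (diagonal c)⁻¹, hd,
    conjTranspose_mul_diagonal_mul_apply_self, hcol]

theorem stmt19 (K M : ℕ) (hK : 0 < K) (hM : 0 < M) (G : Matrix (Fin K) (Fin M) ℂ)
    (h0 : ∀ (k : Fin K) (l : Fin M), G k l ≠ 0)
    (c : Fin (K * M) → ℂ) (hc : ∀ l, c l ≠ 0) (N₀ : ℝ) (hN : 0 < N₀) :
    let A := gfdmOfChar K M G
    let Re := (N₀ : ℂ) •
      ((W (K * M) * (A⁻¹)ᴴ)ᴴ * (Matrix.diagonal c)⁻¹ * ((Matrix.diagonal c)⁻¹)ᴴ *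
        (W (K * M) * (A⁻¹)ᴴ))
    ∀ (k : Fin K) (m m' : Fin M),
      Re (vecIdx k m) (vecIdx k m) = Re (vecIdx k m') (vecIdx k m') :=
  stmt19_general K M G c N₀

end GFDM
end
end
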